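/- Let F be a non-empty totally bounded subset of a uniformly perfect metric space with more than one point, with 0 < dim_A F < ∞ and dim_B_upper F > 0. Then the function θ ↦ dim_θ_upper F / θ is strictly decreasing on (0,1]. -/

import Mathlib

open Metric Set Filter MeasureTheory Topology

/-- A metric space is `c`-uniformly perfect for some `c ∈ (0,1)`:
for all `x` and `0 < R < diam X`, `B(x,R) \ B(x,cR) ≠ ∅`. -/
def UniformlyPerfect (X : Type*) [MetricSpace X] : Prop :=
  ∃ c : ℝ, 0 < c ∧ c < 1 ∧ ∀ (x : X) (R : ℝ), 0 < R →
    ENNReal.ofReal R < EMetric.diam (Set.univ : Set X) →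
    ∃ y : X, dist x y < R ∧ c * R ≤ dist x y

/-- `Φ` is admissible: on some interval `(0,Y)` it satisfies `0 < Φ(δ) ≤ δ`,
`Φ(δ)/δ → 0` as `δ → 0⁺`, and `Φ` is monotonic on `(0,Y)`. -/
def Admissible (Φ : ℝ → ℝ) : Prop :=
  ∃ Y : ℝ, 0 < Y ∧ (∀ δ ∈ Set.Ioo (0:ℝ) Y, 0 < Φ δ ∧ Φ δ ≤ δ) ∧
    Filter.Tendsto (fun δ => Φ δ / δ) (nhdsWithin 0 (Set.Ioi 0)) (nhds 0) ∧
    (MonotoneOn Φ (Set.Ioo 0 Y) ∨ AntitoneOn Φ (Set.Ioo 0 Y))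

/-- There is a (finite) cover of `F` by sets of diameter in `[Φ(δ), δ]`
whose `s`-diameter sum is at most `ε`. -/
def CoverSum {X : Type*} [MetricSpace X] (Φ : ℝ → ℝ) (s ε δ : ℝ) (F : Set X) : Prop :=
  ∃ (n : ℕ) (U : Fin n → Set X), F ⊆ ⋃ i, U i ∧
    (∀ i, Φ δ ≤ Metric.diam (U i) ∧ Metric.diam (U i) ≤ δ) ∧
    ∑ i, Metric.diam (U i) ^ s ≤ ε

/-- The upper `Φ`-intermediate dimension. -/
noncomputable def upperPhiDim {X : Type*} [MetricSpace X] (Φ : ℝ → ℝ) (F : Set X) : ℝ :=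
  sInf {s : ℝ | 0 ≤ s ∧ ∀ ε : ℝ, 0 < ε → ∃ δ₀ ∈ Set.Ioc (0:ℝ) 1,
    ∀ δ ∈ Set.Ioo (0:ℝ) δ₀, CoverSum Φ s ε δ F}

/-- The lower `Φ`-intermediate dimension. -/
noncomputable def lowerPhiDim {X : Type*} [MetricSpace X] (Φ : ℝ → ℝ) (F : Set X) : ℝ :=
  sInf {s : ℝ | 0 ≤ s ∧ ∀ ε : ℝ, 0 < ε → ∀ δ₀ ∈ Set.Ioc (0:ℝ) 1,
    ∃ δ ∈ Set.Ioo (0:ℝ) δ₀, CoverSum Φ s ε δ F}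

/-- The smallest number of sets of diameter at most `δ` needed to cover `F`. -/
noncomputable def coverNum {X : Type*} [MetricSpace X] (F : Set X) (δ : ℝ) : ℕ :=
  sInf {n : ℕ | ∃ U : Fin n → Set X, F ⊆ ⋃ i, U i ∧ ∀ i, Metric.diam (U i) ≤ δ}

/-- Upper box (Minkowski) dimension. -/
noncomputable def upperBoxDim {X : Type*} [MetricSpace X] (F : Set X) : ℝ :=
  Filter.limsup (fun δ : ℝ => Real.log (coverNum F δ) / -Real.log δ)
    (nhdsWithin 0 (Set.Ioi 0))

/-- Lower box (Minkowski) dimension. -/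
noncomputable def lowerBoxDim {X : Type*} [MetricSpace X] (F : Set X) : ℝ :=
  Filter.liminf (fun δ : ℝ => Real.log (coverNum F δ) / -Real.log δ)
    (nhdsWithin 0 (Set.Ioi 0))

/-- `α` witnesses the Assouad dimension bound for `F`. -/
def IsAssouadBound {X : Type*} [MetricSpace X] (F : Set X) (α : ℝ) : Prop :=
  0 ≤ α ∧ ∃ C : ℝ, 0 < C ∧ ∀ x ∈ F, ∀ r R : ℝ, 0 < r → r < R →
    (coverNum (Metric.ball x R ∩ F) r : ℝ) ≤ C * (R / r) ^ α

/-- The Assouad dimension (junk value `0` if no bound exists). -/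
noncomputable def assouadDim {X : Type*} [MetricSpace X] (F : Set X) : ℝ :=
  sInf {α : ℝ | IsAssouadBound F α}

/-- The upper `θ`-intermediate dimension: Hausdorff dimension at `θ = 0`,
upper box dimension at `θ = 1`, and `upperPhiDim` with `Φ(δ) = δ^(1/θ)` in between. -/
noncomputable def upperThetaDim {X : Type*} [MetricSpace X] (θ : ℝ) (F : Set X) : ℝ :=
  if θ = 0 then (dimH F).toReal
  else if θ = 1 then upperBoxDim F
  else upperPhiDim (fun δ => δ ^ (1/θ)) F

/-- The lower `θ`-intermediate dimension. -/
noncomputable def lowerThetaDim {X : Type*} [MetricSpace X] (θ : ℝ) (F : Set X) : ℝ :=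
  if θ = 0 then (dimH F).toReal
  else if θ = 1 then lowerBoxDim F
  else lowerPhiDim (fun δ => δ ^ (1/θ)) F

/-!
Let `s > dim_θ F` and let `A` bound the Assouad dimension. A cover witnessing `s` at scale
`δ = Δ ^ m` (diameters in `[δ ^ (1/θ), δ]`) is refined to a cover at scale `Δ`: sets larger than
`Δ` are chopped into `≲ (|U| / Δ) ^ A` pieces by the Assouad bound, and sets smaller than
`Δ ^ (1/φ)` are fattened, which uniform perfectness allows. Choosing `m` optimally gives
`dim_φ F / φ ≤ s A / (θ A + (φ - θ) s)`, by the same counting also for `φ = 1`. As `s ↓ dim_θ F`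
the right-hand side tends to a value strictly below `dim_θ F / θ`, because `dim_θ F > 0`: indeed
`0 < dim_B F ≤ dim_θ F / θ`.
-/

section CoverNum

variable {X : Type*} [MetricSpace X]

lemma coverNum_le_card {S : Set X} {δ : ℝ} {ι : Type*} [Fintype ι] (U : ι → Set X)
    (hS : S ⊆ ⋃ i, U i) (hU : ∀ i, diam (U i) ≤ δ) : coverNum S δ ≤ Fintype.card ι := by
  refine Nat.sInf_le ⟨fun j => U ((Fintype.equivFin ι).symm j), ?_, fun j => hU _⟩
  rwa [(Fintype.equivFin ι).symm.surjective.iUnion_comp U]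

lemma exists_cover_coverNum {S : Set X} (hS : TotallyBounded S) {δ : ℝ} (hδ : 0 < δ) :
    ∃ U : Fin (coverNum S δ) → Set X, S ⊆ ⋃ i, U i ∧ ∀ i, diam (U i) ≤ δ := by
  refine Nat.sInf_mem (s := {n | ∃ U : Fin n → Set X, S ⊆ ⋃ i, U i ∧ ∀ i, diam (U i) ≤ δ}) ?_
  obtain ⟨t, ht, hcov⟩ := Metric.totallyBounded_iff.1 hS (δ / 2) (half_pos hδ)
  lift t to Finset X using ht
  refine ⟨t.card, fun i => ball (t.equivFin.symm i : X) (δ / 2), fun x hx => ?_, fun i => ?_⟩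
  · obtain ⟨y, hy, hxy⟩ := mem_iUnion₂.1 (hcov hx)
    exact mem_iUnion.2 ⟨t.equivFin ⟨y, hy⟩, by simpa using hxy⟩
  · exact (diam_ball (half_pos hδ).le).trans_eq (by ring)

lemma coverNum_mono {S T : Set X} (hST : S ⊆ T) (hT : TotallyBounded T) {δ : ℝ} (hδ : 0 < δ) :
    coverNum S δ ≤ coverNum T δ := by
  obtain ⟨U, hTU, hU⟩ := exists_cover_coverNum hT hδ
  simpa using coverNum_le_card U (hST.trans hTU) hU

lemma coverNum_le_sum {F : Set X} (hF : TotallyBounded F) {δ : ℝ} (hδ : 0 < δ) {n : ℕ}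
    (U : Fin n → Set X) (hFU : F ⊆ ⋃ i, U i) :
    coverNum F δ ≤ ∑ i, coverNum (U i ∩ F) δ := by
  choose V hV hVδ using fun i =>
    exists_cover_coverNum (hF.subset (inter_subset_right (s := U i))) hδ
  have hcov : F ⊆ ⋃ p : Σ i, Fin (coverNum (U i ∩ F) δ), V p.1 p.2 := by
    intro x hx
    obtain ⟨i, hi⟩ := mem_iUnion.1 (hFU hx)
    obtain ⟨j, hj⟩ := mem_iUnion.1 (hV i ⟨hi, hx⟩)
    exact mem_iUnion.2 ⟨⟨i, j⟩, hj⟩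
  simpa using coverNum_le_card _ hcov fun p => hVδ p.1 p.2

end CoverNum

section Assouad

variable {X : Type*} [MetricSpace X]

def IsAssouadBoundWith (F : Set X) (A C : ℝ) : Prop :=
  ∀ x ∈ F, ∀ r R : ℝ, 0 < r → r < R → (coverNum (ball x R ∩ F) r : ℝ) ≤ C * (R / r) ^ A

lemma IsAssouadBoundWith.mono {F : Set X} {A A' C : ℝ} (h : IsAssouadBoundWith F A C)
    (hC : 0 ≤ C) (hAA' : A ≤ A') : IsAssouadBoundWith F A' C := fun x hx r R hr hrR =>
  (h x hx r R hr hrR).trans <| mul_le_mul_of_nonneg_left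
    (Real.rpow_le_rpow_of_exponent_le ((one_le_div hr).2 hrR.le) hAA') hC

variable [BoundedSpace X] {F : Set X} {A C : ℝ}

lemma coverNum_inter_le (hF : TotallyBounded F) (hb : IsAssouadBoundWith F A C) (hC : 0 ≤ C)
    {U : Set X} {Δ : ℝ} (hΔ : 0 < Δ) (hU : Δ < 2 * diam U) :
    (coverNum (U ∩ F) Δ : ℝ) ≤ C * (2 * diam U / Δ) ^ A := by
  rcases (U ∩ F).eq_empty_or_nonempty with hUF | ⟨x, hxU, hxF⟩
  · have : coverNum (U ∩ F) Δ ≤ 0 := by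
      simpa using coverNum_le_card (fun _ : Fin 0 => (∅ : Set X)) (by simp [hUF]) (by simp)
    rw [Nat.le_zero.1 this, Nat.cast_zero]
    have := diam_nonneg (s := U)
    positivity
  · have hsub : U ∩ F ⊆ ball x (2 * diam U) ∩ F := by
      refine inter_subset_inter_left F fun u hu => mem_ball.2 ?_
      have := dist_le_diam_of_mem (Bornology.IsBounded.all U) hu hxU
      linarith
    calc (coverNum (U ∩ F) Δ : ℝ)
        ≤ coverNum (ball x (2 * diam U) ∩ F) Δ := by
          exact_mod_cast coverNum_mono hsub (hF.subset inter_subset_right) hΔ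
      _ ≤ C * (2 * diam U / Δ) ^ A := hb x hxF Δ _ hΔ hU

lemma coverNum_inter_le_one_add (hF : TotallyBounded F) (hb : IsAssouadBoundWith F A C)
    (hC : 0 ≤ C) (U : Set X) {Δ : ℝ} (hΔ : 0 < Δ) :
    (coverNum (U ∩ F) Δ : ℝ) ≤ 1 + C * (2 * diam U / Δ) ^ A := by
  have := diam_nonneg (s := U)
  rcases le_or_gt (diam U) Δ with hUΔ | hUΔ
  · have hN : coverNum (U ∩ F) Δ ≤ 1 := by
      simpa using coverNum_le_card (fun _ : Fin 1 => U) (fun x hx => mem_iUnion.2 ⟨0, hx.1⟩)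
        fun _ => hUΔ
    have : 0 ≤ C * (2 * diam U / Δ) ^ A := by positivity
    have : (coverNum (U ∩ F) Δ : ℝ) ≤ 1 := by exact_mod_cast hN
    linarith
  · have := coverNum_inter_le hF hb hC hΔ (by linarith : Δ < 2 * diam U)
    linarith

end Assouad

section Fattening

variable (X : Type*) [MetricSpace X]

def HasFattening (K r : ℝ) : Prop :=
  ∀ V : Set X, ∃ W, V ⊆ W ∧ r ≤ diam W ∧ diam W ≤ max (diam V) (K * r)

variable {X} [BoundedSpace X]

lemma hasFattening_of_forall_exists_dist [Nonempty X] {c r : ℝ} (hr : 0 < r)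
    (hy : ∀ x : X, ∃ y, dist x y < r / c ∧ r ≤ dist x y) :
    HasFattening X (1 + 1 / c) r := by
  have key : ∀ V : Set X, V.Nonempty → diam V < r →
      ∃ W, V ⊆ W ∧ r ≤ diam W ∧ diam W ≤ (1 + 1 / c) * r := by
    rintro V ⟨x, hx⟩ hV
    obtain ⟨y, hxy, hrxy⟩ := hy x
    refine ⟨V ∪ {y}, subset_union_left, ?_, ?_⟩
    · exact hrxy.trans (dist_le_diam_of_mem (Bornology.IsBounded.all _)
        (mem_union_left _ hx) (mem_union_right _ rfl))
    · calc diam (V ∪ {y}) ≤ diam V + dist x y + diam {y} := diam_union hx rfl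
        _ ≤ r + r / c + 0 := by rw [diam_singleton]; gcongr
        _ = (1 + 1 / c) * r := by ring
  intro V
  rcases le_or_gt r (diam V) with hrV | hVr
  · exact ⟨V, subset_rfl, hrV, le_max_left _ _⟩
  rcases V.eq_empty_or_nonempty with rfl | hV
  · obtain ⟨W, -, hrW, hWr⟩ := key {Classical.arbitrary X} (singleton_nonempty _)
      (by rwa [diam_singleton])
    exact ⟨W, empty_subset _, hrW, hWr.trans (le_max_right _ _)⟩
  · obtain ⟨W, hVW, hrW, hWr⟩ := key V hV hVr
    exact ⟨W, hVW, hrW, hWr.trans (le_max_right _ _)⟩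

lemma tendsto_rpow_nhdsGT_zero {p : ℝ} (hp : 0 < p) :
    Tendsto (fun x : ℝ => x ^ p) (𝓝[>] 0) (𝓝[>] 0) := by
  refine tendsto_nhdsWithin_of_tendsto_nhds_of_eventually_within _ ?_
    (eventually_nhdsWithin_of_forall fun x hx => Real.rpow_pos_of_pos hx p)
  have := (Real.continuousAt_rpow_const 0 p (Or.inr hp.le)).tendsto
  rw [Real.zero_rpow hp.ne'] at this
  exact this.mono_left nhdsWithin_le_nhds

lemma eventually_mul_rpow_le {p : ℝ} (hp : 1 < p) (K : ℝ) :
    ∀ᶠ x in 𝓝[>] 0, K * x ^ p ≤ x := by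
  have hlim : Tendsto (fun x : ℝ => K * x ^ (p - 1)) (𝓝[>] 0) (𝓝 0) := by
    simpa using ((tendsto_rpow_nhdsGT_zero (sub_pos.2 hp)).mono_right
      nhdsWithin_le_nhds).const_mul K
  filter_upwards [hlim.eventually (eventually_le_nhds one_pos), self_mem_nhdsWithin]
    with x hx (hx0 : 0 < x)
  rw [Real.rpow_sub_one hx0.ne', mul_div_assoc', div_le_one hx0] at hx
  exact hx

lemma UniformlyPerfect.eventually_hasFattening [Nontrivial X] (hX : UniformlyPerfect X)
    {p : ℝ} (hp : 1 < p) :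
    ∃ K, 0 < K ∧ ∀ᶠ Δ in 𝓝[>] 0, HasFattening X K (Δ ^ p) ∧ K * Δ ^ p ≤ Δ := by
  obtain ⟨c, hc0, -, hup⟩ := hX
  have hdiam : 0 < EMetric.diam (univ : Set X) := ediam_pos_iff.2 nontrivial_univ
  have hsmall : ∀ᶠ r in 𝓝 (0 : ℝ), ENNReal.ofReal (r / c) < EMetric.diam (univ : Set X) := by
    have hlim : Tendsto (fun r : ℝ => ENNReal.ofReal (r / c)) (𝓝 0) (𝓝 0) := by
      simpa using ENNReal.tendsto_ofReal ((tendsto_id (x := 𝓝 (0 : ℝ))).div_const c)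
    exact hlim.eventually (eventually_lt_nhds hdiam)
  have hfat : ∀ᶠ r in 𝓝[>] 0, HasFattening X (1 + 1 / c) r := by
    filter_upwards [hsmall.filter_mono nhdsWithin_le_nhds, self_mem_nhdsWithin]
      with r hr (hr0 : 0 < r)
    refine hasFattening_of_forall_exists_dist hr0 fun x => ?_
    obtain ⟨y, hxy, hcy⟩ := hup x (r / c) (div_pos hr0 hc0) hr
    exact ⟨y, hxy, by rwa [mul_div_cancel₀ r hc0.ne'] at hcy⟩
  exact ⟨1 + 1 / c, by positivity,
    ((tendsto_rpow_nhdsGT_zero (zero_lt_one.trans hp)).eventually hfat).and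
      (eventually_mul_rpow_le hp _)⟩

end Fattening

section CoverSum

variable {X : Type*} [MetricSpace X] {Φ : ℝ → ℝ} {s t ε δ : ℝ} {F : Set X}

lemma CoverSum.mono {ε' : ℝ} (h : CoverSum Φ s ε δ F) (hε : ε ≤ ε') : CoverSum Φ s ε' δ F :=
  let ⟨n, U, hFU, hU, hsum⟩ := h
  ⟨n, U, hFU, hU, hsum.trans hε⟩

lemma coverSum_of_fintype {ι : Type*} [Fintype ι] (U : ι → Set X) (hFU : F ⊆ ⋃ i, U i)
    (hU : ∀ i, Φ δ ≤ diam (U i) ∧ diam (U i) ≤ δ) (hsum : ∑ i, diam (U i) ^ s ≤ ε) :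
    CoverSum Φ s ε δ F := by
  let e := (Fintype.equivFin ι).symm
  refine ⟨Fintype.card ι, fun j => U (e j), ?_, fun j => hU _, ?_⟩
  · rwa [e.surjective.iUnion_comp U]
  · rwa [← e.sum_comp (fun i => diam (U i) ^ s)] at hsum

lemma coverSum_of_subset_iUnion {n : ℕ} (S : Fin n → Set X) (hFS : F ⊆ ⋃ i, S i)
    (ε : Fin n → ℝ) (h : ∀ i, CoverSum Φ s (ε i) δ (S i)) : CoverSum Φ s (∑ i, ε i) δ F := by
  choose k U hSU hU hsum using h
  refine coverSum_of_fintype (fun p : Σ i, Fin (k i) => U p.1 p.2) (fun x hx => ?_)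
    (fun p => hU p.1 p.2) ?_
  · obtain ⟨i, hi⟩ := mem_iUnion.1 (hFS hx)
    obtain ⟨j, hj⟩ := mem_iUnion.1 (hSU i hi)
    exact mem_iUnion.2 ⟨⟨i, j⟩, hj⟩
  · rw [← Finset.univ_sigma_univ, Finset.sum_sigma]
    exact Finset.sum_le_sum fun i _ => hsum i

lemma coverSum_of_hasFattening {K : ℝ} (hfat : HasFattening X K (Φ δ)) (hKδ : K * Φ δ ≤ δ)
    (ht : 0 ≤ t) {ι : Type*} [Fintype ι] (V : ι → Set X) (hFV : F ⊆ ⋃ i, V i)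
    (hV : ∀ i, diam (V i) ≤ δ) :
    CoverSum Φ t (∑ i, max (diam (V i)) (K * Φ δ) ^ t) δ F := by
  choose W hVW hW hWV using fun i => hfat (V i)
  refine coverSum_of_fintype W (hFV.trans (iUnion_mono hVW))
    (fun i => ⟨hW i, (hWV i).trans (max_le (hV i) hKδ)⟩)
    (Finset.sum_le_sum fun i _ => Real.rpow_le_rpow diam_nonneg (hWV i) ht)

variable [BoundedSpace X] {A C K Δ : ℝ}

lemma coverSum_inter_of_lt_diam (hF : TotallyBounded F) (hb : IsAssouadBoundWith F A C)
    (hC : 0 ≤ C) (hfat : HasFattening X K (Φ Δ)) (hKΔ : K * Φ Δ ≤ Δ) (ht : 0 ≤ t)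
    (hΔ : 0 < Δ) {U : Set X} (hU : Δ < 2 * diam U) :
    CoverSum Φ t (C * (2 * diam U / Δ) ^ A * Δ ^ t) Δ (U ∩ F) := by
  obtain ⟨P, hP, hPΔ⟩ := exists_cover_coverNum (hF.subset inter_subset_right) hΔ
  refine (coverSum_of_hasFattening hfat hKΔ ht P hP hPΔ).mono ?_
  calc ∑ i, max (diam (P i)) (K * Φ Δ) ^ t
      ≤ ∑ _i : Fin (coverNum (U ∩ F) Δ), Δ ^ t := Finset.sum_le_sum fun i _ =>
        Real.rpow_le_rpow (le_max_of_le_left diam_nonneg) (max_le (hPΔ i) hKΔ) ht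
    _ = coverNum (U ∩ F) Δ * Δ ^ t := by simp
    _ ≤ C * (2 * diam U / Δ) ^ A * Δ ^ t := by
      gcongr
      exact coverNum_inter_le hF hb hC hΔ hU

lemma coverSum_inter (hF : TotallyBounded F) (hb : IsAssouadBoundWith F A C) (hC : 0 ≤ C)
    (hfat : HasFattening X K (Φ Δ)) (hKΦ : 0 ≤ K * Φ Δ) (hKΔ : K * Φ Δ ≤ Δ) (ht : 0 ≤ t)
    (hΔ : 0 < Δ) (U : Set X) :
    CoverSum Φ t (diam U ^ t + (K * Φ Δ) ^ t + C * (2 * diam U / Δ) ^ A * Δ ^ t) Δ (U ∩ F) := by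
  have hU0 := diam_nonneg (s := U)
  have hchop : 0 ≤ C * (2 * diam U / Δ) ^ A * Δ ^ t := by positivity
  rcases le_or_gt (diam U) Δ with hUΔ | hUΔ
  · refine (coverSum_of_hasFattening hfat hKΔ ht (fun _ : Fin 1 => U)
      (fun x hx => mem_iUnion.2 ⟨0, hx.1⟩) fun _ => hUΔ).mono ?_
    have : max (diam U) (K * Φ Δ) ^ t ≤ diam U ^ t + (K * Φ Δ) ^ t := by
      rcases max_cases (diam U) (K * Φ Δ) with ⟨h, -⟩ | ⟨h, -⟩ <;> rw [h]
      · linarith [Real.rpow_nonneg hKΦ t]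
      · linarith [Real.rpow_nonneg hU0 t]
    simpa using this.trans (le_add_of_nonneg_right hchop)
  · refine (coverSum_inter_of_lt_diam hF hb hC hfat hKΔ ht hΔ (by linarith)).mono ?_
    have := Real.rpow_nonneg hU0 t
    have := Real.rpow_nonneg hKΦ t
    linarith

end CoverSum

section PhiDimSet

variable {X : Type*} [MetricSpace X] {Φ : ℝ → ℝ} {F : Set X}

def upperPhiDimSet (Φ : ℝ → ℝ) (F : Set X) : Set ℝ :=
  {s | 0 ≤ s ∧ ∀ ε > 0, ∀ᶠ δ in 𝓝[>] 0, CoverSum Φ s ε δ F}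

lemma eventually_nhdsGT_zero_iff {P : ℝ → Prop} :
    (∀ᶠ δ in 𝓝[>] 0, P δ) ↔ ∃ δ₀ ∈ Ioc (0 : ℝ) 1, ∀ δ ∈ Ioo 0 δ₀, P δ := by
  rw [eventually_iff, mem_nhdsGT_iff_exists_Ioo_subset]
  refine ⟨fun ⟨u, hu, hP⟩ => ⟨min u 1, ⟨lt_min hu one_pos, min_le_right _ _⟩, fun δ hδ =>
    hP ⟨hδ.1, hδ.2.trans_le (min_le_left _ _)⟩⟩, fun ⟨δ₀, hδ₀, hP⟩ => ⟨δ₀, hδ₀.1, hP⟩⟩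

lemma upperPhiDim_eq_sInf : upperPhiDim Φ F = sInf (upperPhiDimSet Φ F) := by
  simp only [upperPhiDim, upperPhiDimSet, eventually_nhdsGT_zero_iff]

lemma mem_upperPhiDimSet_of_le {s s' : ℝ} (hs : s ∈ upperPhiDimSet Φ F) (hss' : s ≤ s') :
    s' ∈ upperPhiDimSet Φ F := by
  refine ⟨hs.1.trans hss', fun ε hε => ?_⟩
  filter_upwards [hs.2 ε hε, (eventually_lt_nhds one_pos).filter_mono nhdsWithin_le_nhds]
    with δ ⟨n, U, hFU, hU, hsum⟩ hδ1
  refine ⟨n, U, hFU, hU, le_trans (Finset.sum_le_sum fun i _ => ?_) hsum⟩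
  exact Real.rpow_le_rpow_of_exponent_ge' diam_nonneg ((hU i).2.trans hδ1.le) hs.1 hss'

lemma mem_upperPhiDimSet_of_sInf_lt {s : ℝ} (hne : (upperPhiDimSet Φ F).Nonempty)
    (hs : sInf (upperPhiDimSet Φ F) < s) : s ∈ upperPhiDimSet Φ F :=
  let ⟨_, ha, has⟩ := exists_lt_of_csInf_lt hne hs
  mem_upperPhiDimSet_of_le ha has.le

lemma eventually_coverSum_rpow {s ε m : ℝ} (hs : s ∈ upperPhiDimSet Φ F) (hε : 0 < ε)
    (hm : 0 < m) : ∀ᶠ Δ in 𝓝[>] 0, CoverSum Φ s ε (Δ ^ m) F :=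
  (tendsto_rpow_nhdsGT_zero hm).eventually (hs.2 ε hε)

lemma upperThetaDim_eq_sInf {θ : ℝ} (hθ0 : 0 < θ) (hθ1 : θ < 1) :
    upperThetaDim θ F = sInf (upperPhiDimSet (fun δ => δ ^ (1 / θ)) F) := by
  rw [upperThetaDim, if_neg hθ0.ne', if_neg hθ1.ne, upperPhiDim_eq_sInf]

lemma upperThetaDim_one : upperThetaDim 1 F = upperBoxDim F := by
  rw [upperThetaDim, if_neg one_ne_zero, if_pos rfl]

end PhiDimSet

section Estimates

variable {ι : Type*} [Fintype ι] {d : ι → ℝ} {Δ m s t : ℝ}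

lemma card_mul_rpow_le_sum_rpow {θ φ : ℝ} (hΔ0 : 0 < Δ) (hΔ1 : Δ ≤ 1)
    (hd : ∀ i, (Δ ^ m) ^ (1 / θ) ≤ d i) (hs : 0 ≤ s) (hθ : 0 < θ) (hφ : 0 < φ)
    (h : m * s * φ ≤ t * θ) : Fintype.card ι * Δ ^ (t / φ) ≤ ∑ i, d i ^ s := by
  have hexp : m * (1 / θ) * s ≤ t / φ := by
    rw [le_div_iff₀ hφ]
    calc m * (1 / θ) * s * φ = m * s * φ / θ := by ring
      _ ≤ t := by rw [div_le_iff₀ hθ]; exact h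
  have hΔd : ∀ i, Δ ^ (t / φ) ≤ d i ^ s := fun i => calc
    Δ ^ (t / φ) ≤ Δ ^ (m * (1 / θ) * s) := Real.rpow_le_rpow_of_exponent_ge hΔ0 hΔ1 hexp
    _ = ((Δ ^ m) ^ (1 / θ)) ^ s := by rw [Real.rpow_mul hΔ0.le, Real.rpow_mul hΔ0.le]
    _ ≤ d i ^ s := Real.rpow_le_rpow (by positivity) (hd i) hs
  simpa using Finset.sum_le_sum fun i (_ : i ∈ Finset.univ) => hΔd i

lemma rpow_mul_sum_rpow_le {A : ℝ} (hΔ0 : 0 < Δ) (hΔ1 : Δ ≤ 1)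
    (hd : ∀ i, 0 < d i ∧ d i ≤ Δ ^ m) (hsA : s ≤ A) (h : A - m * (A - s) ≤ t) :
    Δ ^ (t - A) * ∑ i, d i ^ A ≤ ∑ i, d i ^ s := by
  have hdA : ∀ i, d i ^ A ≤ Δ ^ (m * (A - s)) * d i ^ s := fun i => calc
    d i ^ A = d i ^ s * d i ^ (A - s) := by rw [← Real.rpow_add (hd i).1]; ring_nf
    _ ≤ d i ^ s * (Δ ^ m) ^ (A - s) := by
      obtain ⟨hd0, hdΔ⟩ := hd i
      gcongr
    _ = Δ ^ (m * (A - s)) * d i ^ s := by rw [Real.rpow_mul hΔ0.le]; ring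
  have hΔ : Δ ^ (t - A) * Δ ^ (m * (A - s)) ≤ 1 := by
    rw [← Real.rpow_add hΔ0]
    exact Real.rpow_le_one hΔ0.le hΔ1 (by linarith)
  calc Δ ^ (t - A) * ∑ i, d i ^ A
      ≤ Δ ^ (t - A) * ∑ i, Δ ^ (m * (A - s)) * d i ^ s := by gcongr with i; exact hdA i
    _ = Δ ^ (t - A) * Δ ^ (m * (A - s)) * ∑ i, d i ^ s := by rw [← Finset.mul_sum]; ring
    _ ≤ ∑ i, d i ^ s := mul_le_of_le_one_left
      (Finset.sum_nonneg fun i _ => (Real.rpow_pos_of_pos (hd i).1 s).le) hΔ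

lemma mul_div_rpow_mul_rpow_eq {C d Δ A t : ℝ} (hd : 0 ≤ d) (hΔ : 0 < Δ) :
    C * (2 * d / Δ) ^ A * Δ ^ t = C * 2 ^ A * (Δ ^ (t - A) * d ^ A) := by
  rw [Real.div_rpow (by positivity) hΔ.le, Real.mul_rpow zero_le_two hd, Real.rpow_sub hΔ]
  field_simp

lemma eventually_mul_div_lt_div {d θ φ A : ℝ} (hd : 0 < d) (hθ : 0 < θ) (hθφ : θ < φ)
    (hA : 0 < A) : ∀ᶠ s in 𝓝 d, s * A / (θ * A + (φ - θ) * s) < d / θ := by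
  have hgd : d * A / (θ * A + (φ - θ) * d) < d / θ := by
    rw [div_lt_div_iff₀ (by nlinarith) hθ]
    nlinarith [mul_pos (mul_pos hd hd) (sub_pos.2 hθφ)]
  have hg : ContinuousAt (fun s => s * A / (θ * A + (φ - θ) * s)) d :=
    (continuous_id.mul continuous_const).continuousAt.div (by fun_prop) (by nlinarith)
  exact hg.eventually (eventually_lt_nhds hgd)

end Estimates

section BoxDim

variable {X : Type*} [MetricSpace X] {F : Set X}

lemma upperBoxDim_le_of_eventually_coverNum_mul_rpow_le {t K : ℝ} (ht : 0 ≤ t)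
    (h : ∀ᶠ Δ in 𝓝[>] 0, (coverNum F Δ : ℝ) * Δ ^ t ≤ K) : upperBoxDim F ≤ t := by
  have hlog : Tendsto (fun Δ => -Real.log Δ) (𝓝[>] 0) atTop :=
    tendsto_neg_atBot_atTop.comp Real.tendsto_log_nhdsGT_zero
  have hΔ1 : ∀ᶠ Δ in 𝓝[>] (0 : ℝ), Δ < 1 :=
    (eventually_lt_nhds one_pos).filter_mono nhdsWithin_le_nhds
  have hnonneg : ∀ᶠ Δ in 𝓝[>] (0 : ℝ), 0 ≤ Real.log (coverNum F Δ) / -Real.log Δ := by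
    filter_upwards [hΔ1, self_mem_nhdsWithin] with Δ hΔ1 (hΔ0 : 0 < Δ)
    exact div_nonneg (Real.log_natCast_nonneg _) (neg_nonneg.2 (Real.log_nonpos hΔ0.le hΔ1.le))
  refine le_of_forall_gt_imp_ge_of_dense fun b hb => Filter.limsup_le_of_le
    (isCoboundedUnder_le_of_eventually_le _ hnonneg) ?_
  have hK : ∀ᶠ Δ in 𝓝[>] (0 : ℝ), Real.log K / -Real.log Δ < b - t :=
    (tendsto_const_nhds.div_atTop hlog).eventually (eventually_lt_nhds (sub_pos.2 hb))
  filter_upwards [h, hK, hΔ1, self_mem_nhdsWithin] with Δ hNK hK hΔ1 (hΔ0 : 0 < Δ)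
  have hL : 0 < -Real.log Δ := neg_pos.2 (Real.log_neg hΔ0 hΔ1)
  rcases Nat.eq_zero_or_pos (coverNum F Δ) with hN | hN
  · simp only [hN, Nat.cast_zero, Real.log_zero, zero_div]
    linarith
  have hNΔ : 0 < (coverNum F Δ : ℝ) * Δ ^ t := by
    have := Real.rpow_pos_of_pos hΔ0 t
    positivity
  have hlogN : Real.log (coverNum F Δ) ≤ Real.log K + t * -Real.log Δ := by
    have := Real.log_le_log hNΔ hNK
    rw [Real.log_mul (by positivity) (Real.rpow_pos_of_pos hΔ0 t).ne',
      Real.log_rpow hΔ0] at this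
    linarith
  rw [div_le_iff₀ hL]
  rw [div_lt_iff₀ hL] at hK
  linarith

/-- In an unbounded space every set has the junk diameter `0`, so `coverNum F δ ≤ 1`. -/
lemma boundedSpace_of_upperBoxDim_pos (h : 0 < upperBoxDim F) : BoundedSpace X := by
  by_contra hX
  have huniv : diam (univ : Set X) = 0 :=
    diam_eq_zero_of_unbounded fun hb => hX (Bornology.isBounded_univ.1 hb)
  have : upperBoxDim F ≤ 0 := by
    refine upperBoxDim_le_of_eventually_coverNum_mul_rpow_le (K := 1) le_rfl ?_
    filter_upwards [self_mem_nhdsWithin] with Δ (hΔ : 0 < Δ)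
    have : coverNum F Δ ≤ 1 := by
      simpa using coverNum_le_card (S := F) (fun _ : Fin 1 => (univ : Set X))
        (fun _ _ => mem_iUnion.2 ⟨0, trivial⟩)
        fun _ => huniv.trans_le hΔ.le
    simpa using this
  linarith

end BoxDim

section Transfer

variable {X : Type*} [MetricSpace X] [BoundedSpace X] {F : Set X} {A C θ m s t : ℝ}

lemma mem_upperPhiDimSet_rpow_of_lt [Nontrivial X] (hX : UniformlyPerfect X) (hF : TotallyBounded F)
    (hb : IsAssouadBoundWith F A C) (hC : 0 ≤ C) (hA : 0 ≤ A) (hAt : A < t) (hθ0 : 0 < θ)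
    (hθ1 : θ < 1) : t ∈ upperPhiDimSet (fun δ => δ ^ (1 / θ)) F := by
  refine ⟨hA.trans hAt.le, fun ε hε => ?_⟩
  obtain ⟨K, hK, hfat⟩ := hX.eventually_hasFattening (one_lt_one_div hθ0 hθ1)
  obtain ⟨x, y, hxy⟩ := exists_pair_ne X
  have hD : 0 < diam (univ : Set X) := (dist_pos.2 hxy).trans_le
    (dist_le_diam_of_mem (Bornology.IsBounded.all _) (mem_univ x) (mem_univ y))
  have hlim : Tendsto (fun Δ => C * (2 * diam (univ : Set X)) ^ A * Δ ^ (t - A))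
      (𝓝[>] 0) (𝓝 0) := by
    simpa using ((tendsto_rpow_nhdsGT_zero (sub_pos.2 hAt)).mono_right
      nhdsWithin_le_nhds).const_mul (C * (2 * diam (univ : Set X)) ^ A)
  filter_upwards [hfat, hlim.eventually (eventually_le_nhds hε),
    (eventually_lt_nhds (by positivity : 0 < 2 * diam (univ : Set X))).filter_mono
      nhdsWithin_le_nhds, self_mem_nhdsWithin] with Δ ⟨hfat, hKΔ⟩ hsmall hΔD (hΔ0 : 0 < Δ)
  have := coverSum_inter_of_lt_diam (Φ := fun δ => δ ^ (1 / θ)) hF hb hC hfat hKΔ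
    (hA.trans hAt.le) hΔ0 hΔD
  rw [univ_inter] at this
  refine this.mono (le_of_eq_of_le ?_ hsmall)
  rw [Real.div_rpow (by positivity) hΔ0.le, Real.rpow_sub hΔ0]
  ring

lemma upperBoxDim_le_of_mem_upperPhiDimSet (hF : TotallyBounded F)
    (hb : IsAssouadBoundWith F A C) (hC : 0 ≤ C) (hθ : 0 < θ) (hm : 0 < m) (hsA : s ≤ A)
    (h₁ : m * s ≤ t * θ) (h₂ : A - m * (A - s) ≤ t)
    (hs : s ∈ upperPhiDimSet (fun δ => δ ^ (1 / θ)) F) : upperBoxDim F ≤ t := by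
  have ht : 0 ≤ t := nonneg_of_mul_nonneg_left ((mul_nonneg hm.le hs.1).trans h₁) hθ
  refine upperBoxDim_le_of_eventually_coverNum_mul_rpow_le (K := 1 + C * 2 ^ A) ht ?_
  filter_upwards [eventually_coverSum_rpow hs one_pos hm,
    (eventually_lt_nhds one_pos).filter_mono nhdsWithin_le_nhds, self_mem_nhdsWithin]
    with Δ ⟨n, U, hFU, hU, hsum⟩ hΔ1 (hΔ0 : 0 < Δ)
  have hd : ∀ i, 0 < diam (U i) ∧ diam (U i) ≤ Δ ^ m := fun i =>
    ⟨(by positivity : 0 < (Δ ^ m) ^ (1 / θ)).trans_le (hU i).1, (hU i).2⟩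
  have hn : n * Δ ^ t ≤ 1 := by
    simpa using (card_mul_rpow_le_sum_rpow (φ := 1) hΔ0 hΔ1.le (fun i => (hU i).1) hs.1 hθ
      one_pos (by simpa using h₁)).trans hsum
  have hA : Δ ^ (t - A) * ∑ i, diam (U i) ^ A ≤ 1 :=
    (rpow_mul_sum_rpow_le hΔ0 hΔ1.le hd hsA h₂).trans hsum
  calc (coverNum F Δ : ℝ) * Δ ^ t
      ≤ (∑ i, (coverNum (U i ∩ F) Δ : ℝ)) * Δ ^ t := by
        gcongr
        exact_mod_cast coverNum_le_sum hF hΔ0 U hFU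
    _ ≤ (∑ i, (1 + C * (2 * diam (U i) / Δ) ^ A)) * Δ ^ t := by
        gcongr with i
        exact coverNum_inter_le_one_add hF hb hC (U i) hΔ0
    _ = n * Δ ^ t + C * 2 ^ A * (Δ ^ (t - A) * ∑ i, diam (U i) ^ A) := by
        simp only [Finset.sum_add_distrib, add_mul, Finset.sum_mul,
          mul_div_rpow_mul_rpow_eq diam_nonneg hΔ0, Finset.mul_sum]
        simp
    _ ≤ 1 + C * 2 ^ A := by
        have : 0 ≤ C * 2 ^ A := by positivity
        nlinarith

lemma mem_upperPhiDimSet_rpow_of_mem [Nontrivial X] (hX : UniformlyPerfect X)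
    (hF : TotallyBounded F) (hb : IsAssouadBoundWith F A C) (hC : 0 ≤ C) {φ : ℝ}
    (hθ : 0 < θ) (hφ0 : 0 < φ) (hφ1 : φ < 1) (hm : 0 < m) (hsA : s ≤ A) (hst : s ≤ t)
    (h₁ : m * s * φ ≤ t * θ) (h₂ : A - m * (A - s) ≤ t)
    (hs : s ∈ upperPhiDimSet (fun δ => δ ^ (1 / θ)) F) :
    t ∈ upperPhiDimSet (fun δ => δ ^ (1 / φ)) F := by
  have ht : 0 ≤ t := hs.1.trans hst
  refine ⟨ht, fun ε hε => ?_⟩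
  obtain ⟨K, hK, hfat⟩ := hX.eventually_hasFattening (one_lt_one_div hφ0 hφ1)
  obtain ⟨M, hM_eq⟩ : ∃ M, M = 1 + K ^ t + C * 2 ^ A := ⟨_, rfl⟩
  have hM : 0 < M := by rw [hM_eq]; positivity
  filter_upwards [hfat, eventually_coverSum_rpow hs (div_pos hε hM) hm,
    (eventually_lt_nhds one_pos).filter_mono nhdsWithin_le_nhds, self_mem_nhdsWithin]
    with Δ ⟨hfat, hKΔ⟩ ⟨n, U, hFU, hU, hsum⟩ hΔ1 (hΔ0 : 0 < Δ)
  have hd : ∀ i, 0 < diam (U i) ∧ diam (U i) ≤ Δ ^ m := fun i =>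
    ⟨(by positivity : 0 < (Δ ^ m) ^ (1 / θ)).trans_le (hU i).1, (hU i).2⟩
  have ht' : ∑ i, diam (U i) ^ t ≤ ε / M :=
    (Finset.sum_le_sum fun i _ => Real.rpow_le_rpow_of_exponent_ge (hd i).1
      ((hd i).2.trans (Real.rpow_le_one hΔ0.le hΔ1.le hm.le)) hst).trans hsum
  have hn : n * Δ ^ (t / φ) ≤ ε / M := by
    simpa using (card_mul_rpow_le_sum_rpow hΔ0 hΔ1.le (fun i => (hU i).1) hs.1 hθ hφ0
      h₁).trans hsum
  have hA : Δ ^ (t - A) * ∑ i, diam (U i) ^ A ≤ ε / M :=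
    (rpow_mul_sum_rpow_le hΔ0 hΔ1.le hd hsA h₂).trans hsum
  have hKΦ : 0 ≤ K * Δ ^ (1 / φ) := by positivity
  refine (coverSum_of_subset_iUnion (fun i => U i ∩ F)
    (fun x hx => (mem_iUnion.1 (hFU hx)).elim fun i hi => mem_iUnion.2 ⟨i, hi, hx⟩) _
    fun i => coverSum_inter (Φ := fun δ => δ ^ (1 / φ)) hF hb hC hfat hKΦ hKΔ ht hΔ0 (U i)).mono
    ?_
  calc ∑ i, (diam (U i) ^ t + (K * Δ ^ (1 / φ)) ^ t + C * (2 * diam (U i) / Δ) ^ A * Δ ^ t)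
      = ∑ i, diam (U i) ^ t + K ^ t * (n * Δ ^ (t / φ))
        + C * 2 ^ A * (Δ ^ (t - A) * ∑ i, diam (U i) ^ A) := by
        rw [Real.mul_rpow hK.le (by positivity), ← Real.rpow_mul hΔ0.le, one_div_mul_eq_div]
        simp only [Finset.sum_add_distrib, mul_div_rpow_mul_rpow_eq diam_nonneg hΔ0,
          Finset.mul_sum]
        simp
        ring
    _ ≤ ε / M + K ^ t * (ε / M) + C * 2 ^ A * (ε / M) := by gcongr
    _ = ε := by rw [hM_eq]; field_simp

end Transfer

section Bounds

variable {X : Type*} [MetricSpace X] [BoundedSpace X] {F : Set X} {A C θ : ℝ}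

lemma upperThetaDim_div_le [Nontrivial X] (hX : UniformlyPerfect X) (hF : TotallyBounded F)
    (hb : IsAssouadBoundWith F A C) (hC : 0 ≤ C) (hA : 0 < A) {φ s : ℝ} (hθ : 0 < θ)
    (hθφ : θ < φ) (hφ : φ ≤ 1) (hsA : s ≤ A)
    (hs : s ∈ upperPhiDimSet (fun δ => δ ^ (1 / θ)) F) :
    upperThetaDim φ F / φ ≤ s * A / (θ * A + (φ - θ) * s) := by
  have hs0 := hs.1
  have hφ0 := hθ.trans hθφ
  obtain ⟨D, hD_eq⟩ : ∃ D, D = θ * A + (φ - θ) * s := ⟨_, rfl⟩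
  have hD : 0 < D := by rw [hD_eq]; nlinarith [mul_nonneg (sub_nonneg.2 hθφ.le) hs0]
  rw [← hD_eq, div_le_iff₀' hφ0]
  -- `m = A θ / D` and `t = φ s A / D` turn both exponent constraints into equalities.
  have hm : 0 < A * θ / D := by positivity
  have h₁ : A * θ / D * s * φ ≤ φ * (s * A / D) * θ := le_of_eq (by ring)
  have h₂ : A - A * θ / D * (A - s) ≤ φ * (s * A / D) := by
    refine le_of_eq ?_
    field_simp
    rw [hD_eq]
    ring
  have hst : s ≤ φ * (s * A / D) := by
    rw [← mul_div_assoc, le_div_iff₀ hD, hD_eq]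
    nlinarith [mul_nonneg (mul_nonneg hs0 (sub_nonneg.2 hθφ.le)) (sub_nonneg.2 hsA)]
  rcases hφ.eq_or_lt with rfl | hφ1
  · rw [upperThetaDim_one]
    exact upperBoxDim_le_of_mem_upperPhiDimSet hF hb hC hθ hm hsA (by simpa using h₁) h₂ hs
  · rw [upperThetaDim_eq_sInf hφ0 hφ1]
    exact csInf_le ⟨0, fun _ h => h.1⟩
      (mem_upperPhiDimSet_rpow_of_mem hX hF hb hC hθ hφ0 hφ1 hm hsA hst h₁ h₂ hs)

lemma upperBoxDim_le_upperThetaDim_div (hF : TotallyBounded F) (hb : IsAssouadBoundWith F A C)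
    (hC : 0 ≤ C) (hθ0 : 0 < θ) (hθ1 : θ < 1)
    (hne : (upperPhiDimSet (fun δ => δ ^ (1 / θ)) F).Nonempty) :
    upperBoxDim F ≤ upperThetaDim θ F / θ := by
  refine le_of_forall_gt_imp_ge_of_dense fun b hb' => ?_
  rw [upperThetaDim_eq_sInf hθ0 hθ1, div_lt_iff₀ hθ0] at hb'
  have hs := mem_upperPhiDimSet_of_sInf_lt hne hb'
  have hb0 : 0 ≤ b := nonneg_of_mul_nonneg_left hs.1 hθ0
  refine upperBoxDim_le_of_mem_upperPhiDimSet hF (hb.mono hC (le_max_left A (b * θ))) hC hθ0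
    one_pos (le_max_right _ _) (by rw [one_mul]) ?_ hs
  nlinarith

end Bounds

theorem stmt9_general {X : Type*} [MetricSpace X] [Nontrivial X] (hX : UniformlyPerfect X)
    (F : Set X) (hTB : TotallyBounded F)
    (hAfin : ∃ α, IsAssouadBound F α)
    (hB : 0 < upperBoxDim F) :
    ∀ θ φ : ℝ, 0 < θ → θ < φ → φ ≤ 1 →
      upperThetaDim φ F / φ < upperThetaDim θ F / θ := by
  intro θ φ hθ hθφ hφ1
  have hθ1 : θ < 1 := hθφ.trans_le hφ1
  have := boundedSpace_of_upperBoxDim_pos hB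
  obtain ⟨α, hα, C, hC, hb⟩ := hAfin
  change IsAssouadBoundWith F α C at hb
  set W := upperPhiDimSet (fun δ => δ ^ (1 / θ)) F
  have hWne : W.Nonempty :=
    ⟨α + 1, mem_upperPhiDimSet_rpow_of_lt hX hTB hb hC.le hα (lt_add_one α) hθ hθ1⟩
  set d := upperThetaDim θ F
  have hdW : d = sInf W := upperThetaDim_eq_sInf hθ hθ1
  have hd0 : 0 < d := (div_pos_iff_of_pos_right hθ).1
    (hB.trans_le (upperBoxDim_le_upperThetaDim_div hTB hb hC.le hθ hθ1 hWne))
  set A := max α (d + 1)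
  have hA : 0 < A := (by linarith : 0 < d + 1).trans_le (le_max_right _ _)
  have hev : ∀ᶠ s in 𝓝[>] d, d < s ∧ s < d + 1 ∧ s * A / (θ * A + (φ - θ) * s) < d / θ :=
    eventually_mem_nhdsWithin.and <| nhdsWithin_le_nhds <|
      (eventually_lt_nhds (lt_add_one d)).and (eventually_mul_div_lt_div hd0 hθ hθφ hA)
  obtain ⟨s, hds, hsA, hs⟩ := hev.exists
  calc upperThetaDim φ F / φ ≤ s * A / (θ * A + (φ - θ) * s) :=
        upperThetaDim_div_le hX hTB (hb.mono hC.le (le_max_left _ _)) hC.le hA hθ hθφ hφ1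
          (hsA.le.trans (le_max_right _ _)) (mem_upperPhiDimSet_of_sInf_lt hWne (hdW ▸ hds))
    _ < d / θ := hs

theorem stmt9 {X : Type*} [MetricSpace X] [Nontrivial X] (hX : UniformlyPerfect X)
    (F : Set X) (hne : F.Nonempty) (hTB : TotallyBounded F)
    (hAfin : ∃ α, IsAssouadBound F α) (hApos : 0 < assouadDim F)
    (hB : 0 < upperBoxDim F) :
    ∀ θ φ : ℝ, 0 < θ → θ < φ → φ ≤ 1 →
      upperThetaDim φ F / φ < upperThetaDim θ F / θ :=
  stmt9_general hX F hTB hAfin hB
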